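/- arXiv:1003.0394 — 3 statements merged into one kernel-verified Lean document; each statement's English description precedes it below -/
import Mathlib

section
/- Let $V$ be a real vector space and let $\mu_1, \dots, \mu_k \in V$ be linearly independent vectors, and let $L : V \to \mathbb{R}^q$ be a linear map. Suppose that whenever nonnegative coefficients $\beta_1, \dots, \beta_k \geq 0$ with $\beta_1 \neq 0$ and a partition of $\{1,\dots,k\}$ into two sets $I, J$ (with $1 \in I$) satisfy $L(\sum_{i \in I} \beta_i \mu_i) = L(\sum_{i \in J} \beta_i \mu_i)$, it follows that $\sum_{i \in I} \beta_i \mu_i = \sum_{i \in J} \beta_i \mu_i$. Then if additionally for each $i$ the element $\mu_i$ is not in the span of $\{\mu_j : j \neq i\}$ restricted to the nonnegative cone (i.e., no nontrivial nonnegative combination of the others equals a positive multiple of $\mu_i$), the vectors $L(\mu_1), \dots, L(\mu_k)$ are linearly independent. -/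
/-!
A vanishing combination `∑ cⱼ • L μⱼ` with some `cᵢ ≠ 0` can be normalized (replacing `c` by `-c`)
so that `cᵢ > 0`. Splitting the indices by the sign of `cⱼ` turns it into an equality
`L (∑_I |cⱼ| • μⱼ) = L (∑_J |cⱼ| • μⱼ)` with `i ∈ I`; rigidity lifts this to `∑ cⱼ • μⱼ = 0`,
and linear independence of the `μⱼ` forces `c = 0`.
-/

open Finset

theorem Finset.sum_smul_eq_sum_abs_smul_sub_sum_abs_smul {ι R M : Type*} [Fintype ι] [Ring R]
    [LinearOrder R] [IsOrderedRing R] [AddCommGroup M] [Module R M] (d : ι → R) (v : ι → M) :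
    ∑ j, d j • v j = ∑ j with 0 ≤ d j, |d j| • v j - ∑ j with ¬ 0 ≤ d j, |d j| • v j := by
  rw [← sum_filter_add_sum_filter_not univ (0 ≤ d ·), sub_eq_add_neg, ← sum_neg_distrib]
  congr 1
  · exact sum_congr rfl fun j hj => by rw [abs_of_nonneg (mem_filter.mp hj).2]
  · refine sum_congr rfl fun j hj => ?_
    rw [abs_of_neg (not_le.mp (mem_filter.mp hj).2), neg_smul, neg_neg]

section Rigid

variable {ι V W : Type*} [Fintype ι] [DecidableEq ι] [AddCommGroup V] [Module ℝ V]
  [AddCommGroup W] [Module ℝ W]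

def IsRigid (L : V →ₗ[ℝ] W) (μ : ι → V) : Prop :=
  ∀ (β : ι → ℝ) (I J : Finset ι) (i₀ : ι),
    (∀ i, 0 ≤ β i) → β i₀ ≠ 0 → i₀ ∈ I → Disjoint I J → I ∪ J = univ →
    L (∑ i ∈ I, β i • μ i) = L (∑ i ∈ J, β i • μ i) →
    (∑ i ∈ I, β i • μ i) = ∑ i ∈ J, β i • μ i

theorem IsRigid.sum_smul_eq_zero_of_pos {L : V →ₗ[ℝ] W} {μ : ι → V}
    (hL : IsRigid L μ) {d : ι → ℝ} {i₀ : ι} (hd : 0 < d i₀)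
    (hker : L (∑ j, d j • μ j) = 0) : ∑ j, d j • μ j = 0 := by
  rw [sum_smul_eq_sum_abs_smul_sub_sum_abs_smul] at hker ⊢
  rw [map_sub, sub_eq_zero] at hker
  rw [sub_eq_zero]
  exact hL (|d ·|) _ _ i₀ (fun _ => abs_nonneg _) (abs_ne_zero.mpr hd.ne') (by simpa using hd.le)
    (disjoint_filter_filter_not _ _ _) (filter_union_filter_not_eq _ _) hker

theorem IsRigid.sum_smul_eq_zero_of_ne_zero {L : V →ₗ[ℝ] W} {μ : ι → V}
    (hL : IsRigid L μ) {d : ι → ℝ} {i₀ : ι} (hd : d i₀ ≠ 0)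
    (hker : L (∑ j, d j • μ j) = 0) : ∑ j, d j • μ j = 0 := by
  rcases hd.lt_or_gt with hneg | hpos
  · have hsum_neg : ∑ j, (-d) j • μ j = -∑ j, d j • μ j := by
      simp only [Pi.neg_apply, neg_smul, sum_neg_distrib]
    have := hL.sum_smul_eq_zero_of_pos (d := -d) (neg_pos.mpr hneg)
      (by rw [hsum_neg, map_neg, hker, neg_zero])
    rwa [hsum_neg, neg_eq_zero] at this
  · exact hL.sum_smul_eq_zero_of_pos hpos hker

end Rigid

theorem stmt_5_general (V : Type*) [AddCommGroup V] [Module ℝ V]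
    (k q : ℕ) (μ : Fin k → V) (hμ : LinearIndependent ℝ μ)
    (L : V →ₗ[ℝ] (Fin q → ℝ))
    (hrigid : ∀ (β : Fin k → ℝ) (I J : Finset (Fin k)) (i₀ : Fin k),
      (∀ i, 0 ≤ β i) → β i₀ ≠ 0 → i₀ ∈ I → Disjoint I J → I ∪ J = Finset.univ →
      L (∑ i ∈ I, β i • μ i) = L (∑ i ∈ J, β i • μ i) →
      (∑ i ∈ I, β i • μ i) = ∑ i ∈ J, β i • μ i) :
    LinearIndependent ℝ (fun i => L (μ i)) := by
  rw [Fintype.linearIndependent_iff] at hμ ⊢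
  intro c hc i
  by_contra hci
  refine hci (hμ c ?_ i)
  have hrigid : IsRigid L μ := hrigid
  exact hrigid.sum_smul_eq_zero_of_ne_zero hci (by simpa only [map_sum, map_smul] using hc)

theorem stmt_5 (V : Type*) [AddCommGroup V] [Module ℝ V]
    (k q : ℕ) (μ : Fin k → V) (hμ : LinearIndependent ℝ μ)
    (L : V →ₗ[ℝ] (Fin q → ℝ))
    (hrigid : ∀ (β : Fin k → ℝ) (I J : Finset (Fin k)) (i₀ : Fin k),
      (∀ i, 0 ≤ β i) → β i₀ ≠ 0 → i₀ ∈ I → Disjoint I J → I ∪ J = Finset.univ →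
      L (∑ i ∈ I, β i • μ i) = L (∑ i ∈ J, β i • μ i) →
      (∑ i ∈ I, β i • μ i) = ∑ i ∈ J, β i • μ i)
    (hcone : ∀ i : Fin k, ¬ ∃ (β : Fin k → ℝ) (c : ℝ),
      (∀ j, 0 ≤ β j) ∧ 0 < c ∧ (∃ j, j ≠ i ∧ β j ≠ 0) ∧
      (∑ j ∈ Finset.univ.erase i, β j • μ j) = c • μ i) :
    LinearIndependent ℝ (fun i => L (μ i)) :=
  stmt_5_general V k q μ hμ L hrigid
end

section
/- Let $T$ be a finite tree with all vertices of degree $1$ or $3$ and at least one degree-$3$ vertex, with edges typed by $\{1,2,3\}$ so that the three edges at each degree-$3$ vertex have distinct types. Let $w_1, w_2, w_3$ be unit vectors in $\mathbb{R}^2$ with $w_1+w_2+w_3=0$. Suppose $f, g$ are maps from the vertices of $T$ to $\mathbb{R}^2$ such that for each edge of type $j$ joining vertices $u, v$, the difference $f(v) - f(u)$ (and likewise $g(v)-g(u)$) is a nonzero multiple of $w_j$. If $f$ and $g$ agree on all leaves of $T$, then $f = g$ on all vertices of $T$. -/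
/-!
Root the tree anywhere. A branch vertex `v` has at least two children `u₁, u₂`, and if `f = g`
at both, then `g v - f v` is a multiple of `w (τ s(v, u₁))` and of `w (τ s(v, u₂))`. Three unit
vectors summing to zero have pairwise inner products `-1/2`, so two distinct ones are linearly
independent and `g v = f v`. Induction from the leaves upwards gives `f = g`.
-/

open scoped InnerProductSpace

section UnitTriple

variable {E : Type*} [NormedAddCommGroup E] [InnerProductSpace ℝ E]

lemma inner_eq_neg_half_of_add_add_eq_zero {a b c : E} (ha : ‖a‖ = 1) (hb : ‖b‖ = 1)
    (hc : ‖c‖ = 1) (h : a + b + c = 0) : ⟪a, b⟫_ℝ = -1 / 2 := by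
  have hab : ‖a + b‖ = 1 := by rw [eq_neg_of_add_eq_zero_left h, norm_neg, hc]
  have := norm_add_sq_real a b
  rw [hab, ha, hb] at this
  linarith

lemma eq_zero_of_smul_eq_smul_of_inner_eq_neg_half {a b : E} (ha : ‖a‖ = 1) (hb : ‖b‖ = 1)
    (hab : ⟪a, b⟫_ℝ = -1 / 2) {s t : ℝ} (h : s • a = t • b) : s = 0 := by
  have hs := congrArg (fun x => ⟪x, a⟫_ℝ) h
  have ht := congrArg (fun x => ⟪x, b⟫_ℝ) h
  simp only [real_inner_smul_left, real_inner_self_eq_norm_sq, ha, hb, real_inner_comm a b,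
    hab] at hs ht
  linarith

lemma eq_zero_of_smul_eq_smul_of_sum_eq_zero {w : Fin 3 → E} (hunit : ∀ i, ‖w i‖ = 1)
    (hsum : w 0 + w 1 + w 2 = 0) {i j : Fin 3} (hij : i ≠ j) {s t : ℝ}
    (h : s • w i = t • w j) : s = 0 := by
  obtain ⟨k, hk⟩ : ∃ k, w i + w j + w k = 0 := by
    fin_cases i <;> fin_cases j <;>
      simp only [Fin.reduceFinMk, ne_eq, not_true_eq_false] at hij ⊢ <;> first
      | exact ⟨2, hsum⟩
      | (refine ⟨1, ?_⟩; rw [← hsum]; abel1)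
      | (refine ⟨0, ?_⟩; rw [← hsum]; abel1)
      | (refine ⟨2, ?_⟩; rw [← hsum]; abel1)
  exact eq_zero_of_smul_eq_smul_of_inner_eq_neg_half (hunit i) (hunit j)
    (inner_eq_neg_half_of_add_add_eq_zero (hunit i) (hunit j) (hunit k) hk) h

end UnitTriple

namespace SimpleGraph

variable {V : Type*} {G : SimpleGraph V}

lemma IsTree.eq_penultimate_of_adj_of_dist_lt (hG : G.IsTree) {r v u : V} {p : G.Walk r v}
    (hp : p.IsPath) (hadj : G.Adj v u) (hd : G.dist r u < G.dist r v) : u = p.penultimate := by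
  classical
  obtain ⟨q, hq, hql⟩ := (hG.connected r u).exists_path_of_dist
  have hv : v ∉ q.support := fun hv => by
    have := (G.dist_le (q.takeUntil v hv)).trans (q.length_takeUntil_le_length hv)
    omega
  exact hG.isAcyclic.eq_penultimate_of_adj_end hp hadj
    (hG.isAcyclic.mem_support_of_ne_mem_support_of_adj_of_isPath hp hq hadj hv)

lemma exists_adj_adj_ne_ne_of_two_lt_degree {v : V} [Fintype (G.neighborSet v)]
    (h : 2 < G.degree v) (p : V) :
    ∃ u₁ u₂, G.Adj v u₁ ∧ G.Adj v u₂ ∧ u₁ ≠ u₂ ∧ u₁ ≠ p ∧ u₂ ≠ p := by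
  classical
  have hcard : 1 < ((G.neighborFinset v).erase p).card := by
    have := Finset.pred_card_le_card_erase (s := G.neighborFinset v) (a := p)
    rw [card_neighborFinset_eq_degree] at this
    omega
  obtain ⟨a, ha, b, hb, hab⟩ := Finset.one_lt_card.mp hcard
  rw [Finset.mem_erase, mem_neighborFinset] at ha hb
  exact ⟨a, b, ha.2, hb.2, hab, ha.1, hb.1⟩

/-- Induction from the leaves of a finite tree towards a root: `p` stands for the parent of `v`. -/
theorem IsTree.induction_of_forall_adj_ne [Finite V] (hG : G.IsTree) {P : V → Prop}
    (h : ∀ v p, (∀ u, G.Adj v u → u ≠ p → P u) → P v) (v : V) : P v := by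
  obtain ⟨r⟩ := hG.connected.nonempty
  have hdist : ∀ x, G.dist r x < Nat.card V := fun x => by
    obtain ⟨q, hq, hql⟩ := (hG.connected r x).exists_path_of_dist
    have := Fintype.ofFinite V
    rw [← hql, Nat.card_eq_fintype_card]
    exact hq.length_lt
  induction v using (measure fun x => Nat.card V - G.dist r x).wf.induction with
  | _ x ih =>
    obtain ⟨p, hp, -⟩ := (hG.connected r x).exists_path_of_dist
    refine h x p.penultimate fun u hadj hne => ih u ?_
    have hlt : G.dist r x < G.dist r u := by
      by_contra! hle
      exact hne <| hG.eq_penultimate_of_adj_of_dist_lt hp hadj <|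
        hle.lt_of_ne (hG.dist_ne_of_adj r hadj).symm
    have := hdist u
    show Nat.card V - G.dist r u < Nat.card V - G.dist r x
    omega

end SimpleGraph

theorem stmt_10_general (V : Type*) [Fintype V]
    (G : SimpleGraph V) [DecidableRel G.Adj] (htree : G.IsTree)
    (hdeg : ∀ v : V, G.degree v = 1 ∨ G.degree v = 3)
    (τ : Sym2 V → Fin 3)
    (htype : ∀ v u u' : V, G.degree v = 3 → G.Adj v u → G.Adj v u' → u ≠ u' →
      τ s(v, u) ≠ τ s(v, u'))
    (w : Fin 3 → EuclideanSpace ℝ (Fin 2))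
    (hunit : ∀ i, ‖w i‖ = 1) (hsum : w 0 + w 1 + w 2 = 0)
    (f g : V → EuclideanSpace ℝ (Fin 2))
    (hf : ∀ u v : V, G.Adj u v → ∃ c : ℝ, c ≠ 0 ∧ f v - f u = c • w (τ s(u, v)))
    (hg : ∀ u v : V, G.Adj u v → ∃ c : ℝ, c ≠ 0 ∧ g v - g u = c • w (τ s(u, v)))
    (hleaf : ∀ v : V, G.degree v = 1 → f v = g v) :
    f = g := by
  funext v
  refine htree.induction_of_forall_adj_ne (P := fun v => f v = g v) (fun v p hP => ?_) v
  rcases hdeg v with hv | hv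
  · exact hleaf v hv
  have hdiff : ∀ u, G.Adj v u → f u = g u → ∃ c : ℝ, g v - f v = c • w (τ s(v, u)) := by
    intro u hu hfg
    obtain ⟨a, -, ha⟩ := hf v u hu
    obtain ⟨b, -, hb⟩ := hg v u hu
    exact ⟨a - b, by rw [sub_smul, ← ha, ← hb, hfg]; abel⟩
  obtain ⟨u₁, u₂, h₁, h₂, hne, hu₁, hu₂⟩ :=
    G.exists_adj_adj_ne_ne_of_two_lt_degree (v := v) (by omega) p
  obtain ⟨c₁, hc₁⟩ := hdiff u₁ h₁ (hP u₁ h₁ hu₁)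
  obtain ⟨c₂, hc₂⟩ := hdiff u₂ h₂ (hP u₂ h₂ hu₂)
  have hc₁0 : c₁ = 0 := eq_zero_of_smul_eq_smul_of_sum_eq_zero hunit hsum
    (htype v u₁ u₂ hv h₁ h₂ hne) (hc₁.symm.trans hc₂)
  rw [hc₁0, zero_smul, sub_eq_zero] at hc₁
  exact hc₁.symm

theorem stmt_10 (V : Type*) [Fintype V] [DecidableEq V]
    (G : SimpleGraph V) [DecidableRel G.Adj] (htree : G.IsTree)
    (hdeg : ∀ v : V, G.degree v = 1 ∨ G.degree v = 3)
    (hbranch : ∃ v : V, G.degree v = 3)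
    (τ : Sym2 V → Fin 3)
    (htype : ∀ v u u' : V, G.degree v = 3 → G.Adj v u → G.Adj v u' → u ≠ u' →
      τ s(v, u) ≠ τ s(v, u'))
    (w : Fin 3 → EuclideanSpace ℝ (Fin 2))
    (hunit : ∀ i, ‖w i‖ = 1) (hsum : w 0 + w 1 + w 2 = 0)
    (f g : V → EuclideanSpace ℝ (Fin 2))
    (hf : ∀ u v : V, G.Adj u v → ∃ c : ℝ, c ≠ 0 ∧ f v - f u = c • w (τ s(u, v)))
    (hg : ∀ u v : V, G.Adj u v → ∃ c : ℝ, c ≠ 0 ∧ g v - g u = c • w (τ s(u, v)))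
    (hleaf : ∀ v : V, G.degree v = 1 → f v = g v) :
    f = g :=
  stmt_10_general V G htree hdeg τ htype w hunit hsum f g hf hg hleaf
end

section
/- Let $w_1, w_2, w_3$ be unit vectors in $\mathbb{R}^2$ with $w_1+w_2+w_3=0$, and fix $j \neq j'$ in $\{1,2,3\}$. For points $P, Q \in \mathbb{R}^2$, the intersection point $X(P,Q)$ of the lines $P + \mathbb{R} w_j$ and $Q + \mathbb{R} w_{j'}$ satisfies $\|X(P,Q) - X(P',Q')\| \le 2(\|P-P'\| + \|Q-Q'\|)$ for all $P, P', Q, Q'$. -/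
/-!
Two unit vectors summing with a third unit vector to zero meet at `120°`, i.e. `⟪u, v⟫ = -1/2`.
Writing `D = X - X'` both as `A + t • u` and as `B + s • v` (with `A = P - P'`, `B = Q - Q'`),
we get `A - B = s • v - t • u`, whose squared norm `s² + t² + st` dominates `(|s| + |t|)² / 4`.
Averaging `‖D‖ ≤ ‖A‖ + |t|` and `‖D‖ ≤ ‖B‖ + |s|` then bounds `‖D‖` by `2 (‖A‖ + ‖B‖)`.
-/

open RealInnerProductSpace

section
variable {E : Type*} [NormedAddCommGroup E] [InnerProductSpace ℝ E]

theorem inner_eq_neg_half_of_norm_add_eq_one {u v : E} (hu : ‖u‖ = 1) (hv : ‖v‖ = 1)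
    (huv : ‖u + v‖ = 1) : ⟪u, v⟫ = -1 / 2 := by
  have h := norm_add_sq_real u v
  rw [hu, hv, huv] at h
  linarith

theorem norm_smul_sub_smul_sq_of_inner_eq_neg_half {u v : E} (hu : ‖u‖ = 1) (hv : ‖v‖ = 1)
    (huv : ⟪u, v⟫ = -1 / 2) (s t : ℝ) : ‖s • v - t • u‖ ^ 2 = s ^ 2 + t ^ 2 + s * t := by
  rw [norm_sub_sq_real, norm_smul, norm_smul, hu, hv, real_inner_smul_left,
    real_inner_smul_right, real_inner_comm, huv, Real.norm_eq_abs, Real.norm_eq_abs]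
  simp only [mul_one, sq_abs]
  ring

theorem abs_add_abs_le_two_mul_norm_smul_sub_smul {u v : E} (hu : ‖u‖ = 1) (hv : ‖v‖ = 1)
    (huv : ⟪u, v⟫ = -1 / 2) (s t : ℝ) : |s| + |t| ≤ 2 * ‖s • v - t • u‖ := by
  have h := norm_smul_sub_smul_sq_of_inner_eq_neg_half hu hv huv s t
  apply abs_le_of_sq_le_sq' _ (by positivity) |>.2
  rw [mul_pow, h]
  nlinarith [sq_abs s, sq_abs t, abs_mul_abs_self s, neg_abs_le (s * t), abs_mul s t,
    sq_nonneg (|s| - |t|)]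

theorem norm_le_of_eq_add_smul_of_eq_add_smul {u v : E} (hu : ‖u‖ = 1) (hv : ‖v‖ = 1)
    (huv : ⟪u, v⟫ = -1 / 2) {A B D : E} {t s : ℝ} (hA : D = A + t • u) (hB : D = B + s • v) :
    ‖D‖ ≤ 2 * (‖A‖ + ‖B‖) := by
  have hAB : A - B = s • v - t • u := by
    rw [sub_eq_sub_iff_add_eq_add, ← hA, add_comm, ← hB]
  have hts : |s| + |t| ≤ 2 * ‖A - B‖ :=
    hAB ▸ abs_add_abs_le_two_mul_norm_smul_sub_smul hu hv huv s t
  have hDA : ‖D‖ ≤ ‖A‖ + |t| := by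
    simpa [hA, norm_smul, hu] using norm_add_le A (t • u)
  have hDB : ‖D‖ ≤ ‖B‖ + |s| := by
    simpa [hB, norm_smul, hv] using norm_add_le B (s • v)
  linarith [norm_sub_le A B, norm_nonneg A, norm_nonneg B]

end

theorem exists_add_eq_neg_of_ne {M : Type*} [AddCommGroup M] {w : Fin 3 → M}
    (hsum : w 0 + w 1 + w 2 = 0) {j j' : Fin 3} (hjj : j ≠ j') : ∃ k, w j + w j' = -w k := by
  fin_cases j <;> fin_cases j' <;> simp only [Fin.zero_eta, Fin.mk_one,
    Fin.reduceFinMk, ne_eq, not_true_eq_false] at hjj ⊢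
  all_goals first
    | (refine ⟨0, eq_neg_of_add_eq_zero_left (Eq.trans ?_ hsum)⟩; abel1)
    | (refine ⟨1, eq_neg_of_add_eq_zero_left (Eq.trans ?_ hsum)⟩; abel1)
    | (refine ⟨2, eq_neg_of_add_eq_zero_left (Eq.trans ?_ hsum)⟩; abel1)

theorem stmt_11 (w : Fin 3 → EuclideanSpace ℝ (Fin 2))
    (hunit : ∀ i, ‖w i‖ = 1) (hsum : w 0 + w 1 + w 2 = 0)
    (j j' : Fin 3) (hjj : j ≠ j')
    (P P' Q Q' X X' : EuclideanSpace ℝ (Fin 2))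
    (hX : (∃ t : ℝ, X = P + t • w j) ∧ (∃ t : ℝ, X = Q + t • w j'))
    (hX' : (∃ t : ℝ, X' = P' + t • w j) ∧ (∃ t : ℝ, X' = Q' + t • w j')) :
    ‖X - X'‖ ≤ 2 * (‖P - P'‖ + ‖Q - Q'‖) := by
  have hinner : ⟪w j, w j'⟫ = -1 / 2 := by
    obtain ⟨k, hk⟩ := exists_add_eq_neg_of_ne hsum hjj
    exact inner_eq_neg_half_of_norm_add_eq_one (hunit j) (hunit j') (by rw [hk, norm_neg, hunit])
  obtain ⟨⟨t, rfl⟩, ⟨s, hs⟩⟩ := hX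
  obtain ⟨⟨t', rfl⟩, ⟨s', hs'⟩⟩ := hX'
  refine norm_le_of_eq_add_smul_of_eq_add_smul (hunit j) (hunit j') hinner
    (t := t - t') (s := s - s') ?_ ?_
  · rw [sub_smul]; abel
  · rw [hs, hs', sub_smul]; abel
end
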